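/- Let f_1, …, f_d : ℝ^{n×p} → ℝ be differentiable with f = (1/d)Σ_{i=1}^d f_i, let M > 0 satisfy ‖∇f(X)‖_F ≤ M for all X ∈ R = {X : ‖XᵀX − I_p‖_F ≤ 1/6}, and let β ≥ max{1, (6 + 21M)/5}. For each i let H_i(X) = G_i(X) + β·X(XᵀX − I_p) with G_i(X) = ∇f_i(X)((3/2)I_p − (1/2)XᵀX) − X·sym(Xᵀ∇f_i(X)). Let X_1, …, X_d ∈ ℝ^{n×p} with X̄ = (1/d)Σ_{i=1}^d X_i ∈ R, and suppose each H_i satisfies ‖H_i(X̄) − H_i(X_i)‖_F ≤ L̂·‖X̄ − X_i‖_F for a constant L̂ > 0. Then the stationarity gap satisfies ‖(1/d)Σ_{i=1}^d G_i(X̄)‖_F² + (1/d)Σ_{i=1}^d ‖X_i − X̄‖_F² + ‖X̄ᵀX̄ − I_p‖_F² ≤ 2(L̂² + 1)·( ‖(1/d)Σ_{i=1}^d H_i(X_i)‖_F² + (1/d)Σ_{i=1}^d ‖X_i − X̄‖_F² ). -/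

import Mathlib

/-!
Uniqueness of the Riesz representative makes `∇F(X̄)` the average of the `∇fᵢ(X̄)`; since `G` is
linear in the gradient, the averaged `Gᵢ(X̄)` is `G(X̄)` for `F`, and the averaged `Hᵢ(X̄)` is
`G(X̄) + βE(X̄)`. With `T = X̄ᵀX̄ - I`, cycling traces gives `⟨G, E⟩ = -(3/2) tr(T² sym(X̄ᵀ∇F))`,
and `‖X̄B‖² = ‖B‖² + ⟨B, TB⟩` yields `‖X̄ᵀ∇F‖ ≤ (1 + ‖T‖)‖∇F‖` and `‖E‖² ≥ (1 - ‖T‖)‖T‖²`. On `R`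
this gives `⟨G, E⟩ ≥ -(7/4)M‖T‖²` and `‖E‖² ≥ (5/6)‖T‖²`, so expanding `‖G + βE‖²` and using
`(5/6)β² - (7/2)Mβ ≥ 1` yields `‖G‖² + ‖T‖² ≤ ‖G + βE‖²`. Finally the Lipschitz bounds move the
average of the `Hᵢ` from `X̄` to the `Xᵢ` at the cost of `L̂` times the mean deviation, whose square
is at most the mean squared deviation; `(a + b)² ≤ 2a² + 2b²` finishes.
-/

open Matrix BigOperators Finset Kronecker

/- Equip matrix spaces with the Frobenius norm (finite-dimensional, so the resulting calculus
notions such as `fderiv`/`Differentiable` are norm-independent). -/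
attribute [local instance] Matrix.frobeniusNormedAddCommGroup Matrix.frobeniusNormedSpace

/-- The Frobenius norm of a real matrix. -/
noncomputable def frob {m k : Type*} [Fintype m] [Fintype k] (A : Matrix m k ℝ) : ℝ :=
  Real.sqrt (∑ i, ∑ j, (A i j) ^ 2)

/-- The trace inner product ⟨A, B⟩ = tr(AᵀB) of real matrices. -/
noncomputable def minner {m k : Type*} [Fintype m] [Fintype k] (A B : Matrix m k ℝ) : ℝ :=
  (Aᵀ * B).trace

/-- The symmetric part sym(B) = (B + Bᵀ)/2 of a square matrix. -/
noncomputable def symPart {k : Type*} (B : Matrix k k ℝ) : Matrix k k ℝ :=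
  (1 / 2 : ℝ) • (B + Bᵀ)

/-- The generalized Riemannian gradient G(X) = ∇f(X)((3/2)I - (1/2)XᵀX) - X·sym(Xᵀ∇f(X)),
expressed in terms of the Euclidean gradient matrix `Gf = ∇f(X)`. -/
noncomputable def Gdir {n p : ℕ} (Gf X : Matrix (Fin n) (Fin p) ℝ) :
    Matrix (Fin n) (Fin p) ℝ :=
  Gf * ((3 / 2 : ℝ) • (1 : Matrix (Fin p) (Fin p) ℝ) - (1 / 2 : ℝ) • (Xᵀ * X))
    - X * symPart (Xᵀ * Gf)

/-- The feasibility direction E(X) = X(XᵀX - I). -/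
noncomputable def Edir {n p : ℕ} (X : Matrix (Fin n) (Fin p) ℝ) :
    Matrix (Fin n) (Fin p) ℝ :=
  X * (Xᵀ * X - 1)

/-- The spectral norm (largest singular value) of a real matrix, as the operator norm of the
associated Euclidean linear map. -/
noncomputable def specNorm {m k : Type*} [Fintype m] [Fintype k] [DecidableEq k]
    (A : Matrix m k ℝ) : ℝ :=
  ‖LinearMap.toContinuousLinearMap (Matrix.toEuclideanLin A)‖

/-- The smallest singular value of a real matrix: the square root of the smallest eigenvalue
of AᵀA (= AᴴA over ℝ). -/
noncomputable def sigmaMin {m k : Type*} [Fintype m] [Fintype k] [DecidableEq m] [DecidableEq k]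
    (A : Matrix m k ℝ) : ℝ :=
  Real.sqrt (⨅ i, (Matrix.isHermitian_conjTranspose_mul_self A).eigenvalues i)

section FrobeniusInner

variable {m k : Type*} [Fintype m] [Fintype k]

theorem frob_eq_norm (A : Matrix m k ℝ) : frob A = ‖A‖ := by
  rw [frobenius_norm_def, frob, Real.sqrt_eq_rpow]
  simp only [Real.norm_eq_abs, Real.rpow_two, sq_abs]

theorem minner_eq_sum (A B : Matrix m k ℝ) : minner A B = ∑ i, ∑ j, A i j * B i j := by
  rw [minner, Matrix.trace, sum_comm]
  simp only [Matrix.diag_apply, Matrix.mul_apply, Matrix.transpose_apply]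

theorem minner_self (A : Matrix m k ℝ) : minner A A = ‖A‖ ^ 2 := by
  rw [← frob_eq_norm, frob, Real.sq_sqrt (by positivity), minner_eq_sum]
  simp only [sq]

theorem abs_minner_le (A B : Matrix m k ℝ) : |minner A B| ≤ ‖A‖ * ‖B‖ := by
  refine abs_le_of_sq_le_sq ?_ (mul_nonneg (norm_nonneg A) (norm_nonneg B))
  rw [mul_pow, ← minner_self, ← minner_self]
  simp only [minner_eq_sum, ← Fintype.sum_prod_type']
  simpa only [sq] using
    sum_mul_sq_le_sq_mul_sq univ (fun q : m × k => A q.1 q.2) (fun q => B q.1 q.2)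

theorem minner_comm (A B : Matrix m k ℝ) : minner A B = minner B A := by
  rw [minner, minner, ← trace_transpose, Matrix.transpose_mul, transpose_transpose]

theorem minner_sub_left (A B C : Matrix m k ℝ) : minner (A - B) C = minner A C - minner B C := by
  simp only [minner, transpose_sub, Matrix.sub_mul, trace_sub]

theorem minner_smul_right (c : ℝ) (A B : Matrix m k ℝ) : minner A (c • B) = c * minner A B := by
  simp only [minner, Matrix.mul_smul, trace_smul, smul_eq_mul]

theorem minner_smul_sum_left {ι : Type*} (s : Finset ι) (c : ℝ) (A : ι → Matrix m k ℝ)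
    (B : Matrix m k ℝ) : minner (c • ∑ i ∈ s, A i) B = c * ∑ i ∈ s, minner (A i) B := by
  simp only [minner, transpose_smul, transpose_sum, Matrix.smul_mul,
    Matrix.sum_mul, trace_smul, trace_sum, smul_eq_mul]

theorem norm_add_sq_eq_minner (A B : Matrix m k ℝ) :
    ‖A + B‖ ^ 2 = ‖A‖ ^ 2 + 2 * minner A B + ‖B‖ ^ 2 := by
  rw [← minner_self, ← minner_self, ← minner_self]
  have hBA : minner B A = minner A B := minner_comm B A
  simp only [minner, transpose_add, Matrix.add_mul, Matrix.mul_add, trace_add] at hBA ⊢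
  linarith

theorem eq_of_forall_minner_eq {A B : Matrix m k ℝ} (h : ∀ V, minner A V = minner B V) :
    A = B := by
  have h0 : ‖A - B‖ ^ 2 = 0 := by rw [← minner_self, minner_sub_left, h, sub_self]
  simpa [sub_eq_zero] using h0

end FrobeniusInner

section Trace

variable {q : Type*} [Fintype q]

theorem Matrix.IsSymm.trace_mul_transpose {P : Matrix q q ℝ} (hP : P.IsSymm) (B : Matrix q q ℝ) :
    (P * Bᵀ).trace = (P * B).trace := by
  rw [← trace_transpose, Matrix.transpose_mul, transpose_transpose, hP.eq, trace_mul_comm]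

theorem Matrix.IsSymm.trace_mul_symPart {P : Matrix q q ℝ} (hP : P.IsSymm) (B : Matrix q q ℝ) :
    (P * symPart B).trace = (P * B).trace := by
  rw [symPart, Matrix.mul_smul, trace_smul, Matrix.mul_add, trace_add,
    hP.trace_mul_transpose, smul_eq_mul]
  ring

end Trace

theorem isSymm_transpose_mul_self_sub_one {m k : Type*} [Fintype m] [DecidableEq k]
    (X : Matrix m k ℝ) : (Xᵀ * X - 1).IsSymm := by
  rw [IsSymm, transpose_sub, Matrix.transpose_mul, transpose_transpose, transpose_one]

theorem isSymm_symPart {k : Type*} (B : Matrix k k ℝ) : (symPart B).IsSymm :=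
  (isSymm_add_transpose_self B).smul _

theorem minner_Gdir_Edir {n p : ℕ} (Gf X : Matrix (Fin n) (Fin p) ℝ) :
    minner (Gdir Gf X) (Edir X)
      = -(3 / 2) * minner ((Xᵀ * X - 1) * (Xᵀ * X - 1)) (symPart (Xᵀ * Gf)) := by
  have hT : (Xᵀ * X - 1).IsSymm := isSymm_transpose_mul_self_sub_one X
  have hcoef : (3 / 2 : ℝ) • (1 : Matrix (Fin p) (Fin p) ℝ) - (1 / 2 : ℝ) • (Xᵀ * X)
      = 1 - (1 / 2 : ℝ) • (Xᵀ * X - 1) := by module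
  have hXX : Xᵀ * X = (Xᵀ * X - 1) + 1 := by rw [sub_add_cancel]
  rw [Gdir, Edir, hcoef]
  generalize Xᵀ * X - 1 = T at hT hXX ⊢
  have hTT : (T * T).IsSymm := by rw [IsSymm, Matrix.transpose_mul, hT.eq]
  have hC : (1 - (1 / 2 : ℝ) • T).IsSymm := isSymm_one.sub (hT.smul _)
  have hG : (Gf * (1 - (1 / 2 : ℝ) • T) - X * symPart (Xᵀ * Gf))ᵀ * (X * T)
      = (1 - (1 / 2 : ℝ) • T) * (Xᵀ * Gf)ᵀ * T - symPart (Xᵀ * Gf) * (Xᵀ * X * T) := by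
    rw [transpose_sub, Matrix.transpose_mul, Matrix.transpose_mul, hC.eq,
      (isSymm_symPart _).eq, Matrix.transpose_mul, transpose_transpose, Matrix.sub_mul]
    simp only [Matrix.mul_assoc]
  have h1 : ((1 - (1 / 2 : ℝ) • T) * (Xᵀ * Gf)ᵀ * T).trace
      = ((T - (1 / 2 : ℝ) • (T * T)) * symPart (Xᵀ * Gf)).trace := by
    have hP : (T - (1 / 2 : ℝ) • (T * T)).IsSymm := hT.sub (hTT.smul _)
    rw [trace_mul_comm, ← Matrix.mul_assoc, hP.trace_mul_symPart, ← hP.trace_mul_transpose]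
    congr 1
    simp only [Matrix.mul_sub, Matrix.mul_one, Matrix.mul_smul]
  have h2 : (symPart (Xᵀ * Gf) * (Xᵀ * X * T)).trace
      = ((T * T + T) * symPart (Xᵀ * Gf)).trace := by
    rw [trace_mul_comm, hXX, Matrix.add_mul, Matrix.one_mul]
  simp only [minner]
  rw [hTT.eq, hG, trace_sub, h1, h2, ← trace_sub, ← Matrix.sub_mul,
    show T - (1 / 2 : ℝ) • (T * T) - (T * T + T) = (-(3 / 2) : ℝ) • (T * T) by module,
    Matrix.smul_mul, trace_smul, smul_eq_mul]

section NormEstimates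

variable {m k l : Type*} [Fintype m] [Fintype k] [Fintype l] [DecidableEq k]

theorem norm_mul_sq_sub_norm_sq (X : Matrix m k ℝ) (B : Matrix k l ℝ) :
    ‖X * B‖ ^ 2 - ‖B‖ ^ 2 = minner B ((Xᵀ * X - 1) * B) := by
  rw [← minner_self, ← minner_self]
  simp only [minner, Matrix.transpose_mul, Matrix.sub_mul, Matrix.mul_sub, Matrix.one_mul,
    trace_sub, Matrix.mul_assoc]

theorem abs_norm_mul_sq_sub_norm_sq_le (X : Matrix m k ℝ) (B : Matrix k l ℝ) :
    |‖X * B‖ ^ 2 - ‖B‖ ^ 2| ≤ ‖Xᵀ * X - 1‖ * ‖B‖ ^ 2 := by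
  rw [norm_mul_sq_sub_norm_sq]
  calc |minner B ((Xᵀ * X - 1) * B)| ≤ ‖B‖ * ‖(Xᵀ * X - 1) * B‖ := abs_minner_le _ _
    _ ≤ ‖B‖ * (‖Xᵀ * X - 1‖ * ‖B‖) := by gcongr; exact frobenius_norm_mul _ _
    _ = ‖Xᵀ * X - 1‖ * ‖B‖ ^ 2 := by ring

theorem norm_transpose_mul_le (X : Matrix m k ℝ) (G : Matrix m l ℝ) :
    ‖Xᵀ * G‖ ≤ (1 + ‖Xᵀ * X - 1‖) * ‖G‖ := by
  set t := ‖Xᵀ * X - 1‖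
  have ht : 0 ≤ t := norm_nonneg _
  have hXB : ‖X * (Xᵀ * G)‖ ≤ (1 + t) * ‖Xᵀ * G‖ := by
    have := (abs_le.mp (abs_norm_mul_sq_sub_norm_sq_le X (Xᵀ * G))).2
    refine le_of_sq_le_sq ?_ (by positivity)
    nlinarith [sq_nonneg ‖Xᵀ * G‖]
  have hsq : ‖Xᵀ * G‖ ^ 2 ≤ ‖G‖ * ((1 + t) * ‖Xᵀ * G‖) :=
    calc ‖Xᵀ * G‖ ^ 2 = minner G (X * (Xᵀ * G)) := by
          rw [← minner_self, minner, minner, Matrix.transpose_mul, transpose_transpose,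
            Matrix.mul_assoc]
      _ ≤ ‖G‖ * ‖X * (Xᵀ * G)‖ := (abs_minner_le _ _).trans' (le_abs_self _)
      _ ≤ ‖G‖ * ((1 + t) * ‖Xᵀ * G‖) := by gcongr
  rcases (norm_nonneg (Xᵀ * G)).eq_or_lt with h0 | hpos
  · rw [← h0]; positivity
  · exact le_of_mul_le_mul_right (by linarith) hpos

end NormEstimates

theorem norm_symPart_le {k : Type*} [Fintype k] (B : Matrix k k ℝ) : ‖symPart B‖ ≤ ‖B‖ := by
  rw [symPart, norm_smul]
  calc ‖(1 / 2 : ℝ)‖ * ‖B + Bᵀ‖ ≤ ‖(1 / 2 : ℝ)‖ * (‖B‖ + ‖Bᵀ‖) := by gcongr; exact norm_add_le _ _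
    _ = ‖B‖ := by rw [frobenius_norm_transpose]; norm_num; ring

section Directions

variable {n p : ℕ}

theorem minner_Gdir_Edir_ge (Gf X : Matrix (Fin n) (Fin p) ℝ) :
    -(3 / 2 * (1 + ‖Xᵀ * X - 1‖) * ‖Gf‖ * ‖Xᵀ * X - 1‖ ^ 2) ≤ minner (Gdir Gf X) (Edir X) := by
  set t := ‖Xᵀ * X - 1‖
  have hS : ‖symPart (Xᵀ * Gf)‖ ≤ (1 + t) * ‖Gf‖ :=
    (norm_symPart_le _).trans (norm_transpose_mul_le X Gf)
  have hTT : ‖(Xᵀ * X - 1) * (Xᵀ * X - 1)‖ ≤ t ^ 2 :=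
    (frobenius_norm_mul _ _).trans_eq (sq t).symm
  have hinner := le_of_abs_le (abs_minner_le ((Xᵀ * X - 1) * (Xᵀ * X - 1)) (symPart (Xᵀ * Gf)))
  have hprod : ‖(Xᵀ * X - 1) * (Xᵀ * X - 1)‖ * ‖symPart (Xᵀ * Gf)‖ ≤ t ^ 2 * ((1 + t) * ‖Gf‖) :=
    mul_le_mul hTT hS (norm_nonneg _) (sq_nonneg t)
  rw [minner_Gdir_Edir]
  nlinarith

theorem norm_Edir_sq_ge (X : Matrix (Fin n) (Fin p) ℝ) :
    (1 - ‖Xᵀ * X - 1‖) * ‖Xᵀ * X - 1‖ ^ 2 ≤ ‖Edir X‖ ^ 2 := by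
  have := neg_le_of_abs_le (abs_norm_mul_sq_sub_norm_sq_le X (Xᵀ * X - 1))
  rw [Edir]
  linarith

theorem sq_norm_Gdir_add_sq_le {Gf X : Matrix (Fin n) (Fin p) ℝ} {M β : ℝ}
    (hGf : ‖Gf‖ ≤ M) (hX : ‖Xᵀ * X - 1‖ ≤ 1 / 6) (hβ₀ : 0 ≤ β)
    (hβ : 1 ≤ 5 / 6 * β ^ 2 - 7 / 2 * M * β) :
    ‖Gdir Gf X‖ ^ 2 + ‖Xᵀ * X - 1‖ ^ 2 ≤ ‖Gdir Gf X + β • Edir X‖ ^ 2 := by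
  set t := ‖Xᵀ * X - 1‖
  have ht : 0 ≤ t := norm_nonneg _
  have hGE : -(7 / 4 * M * t ^ 2) ≤ minner (Gdir Gf X) (Edir X) := by
    refine le_trans ?_ (minner_Gdir_Edir_ge Gf X)
    have : (1 + t) * ‖Gf‖ ≤ 7 / 6 * M :=
      mul_le_mul (by linarith) hGf (norm_nonneg _) (by linarith [norm_nonneg Gf])
    nlinarith [sq_nonneg t]
  have hE : 5 / 6 * t ^ 2 ≤ ‖Edir X‖ ^ 2 :=
    le_trans (by nlinarith [sq_nonneg t]) (norm_Edir_sq_ge X)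
  rw [norm_add_sq_eq_minner, minner_smul_right, norm_smul, mul_pow, Real.norm_eq_abs, sq_abs]
  nlinarith [mul_le_mul_of_nonneg_left hE (sq_nonneg β), mul_le_mul_of_nonneg_left hGE hβ₀,
    mul_le_mul_of_nonneg_right hβ (sq_nonneg t)]

end Directions

theorem Gdir_add {n p : ℕ} (G₁ G₂ X : Matrix (Fin n) (Fin p) ℝ) :
    Gdir (G₁ + G₂) X = Gdir G₁ X + Gdir G₂ X := by
  simp only [Gdir, symPart, Matrix.mul_add, Matrix.add_mul, transpose_add, smul_add]
  abel

theorem Gdir_smul {n p : ℕ} (c : ℝ) (G X : Matrix (Fin n) (Fin p) ℝ) :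
    Gdir (c • G) X = c • Gdir G X := by
  simp only [Gdir, symPart, Matrix.mul_smul, Matrix.smul_mul, transpose_smul, ← smul_add,
    smul_comm c, smul_sub]

theorem Gdir_smul_sum {n p : ℕ} {ι : Type*} (s : Finset ι) (c : ℝ)
    (G : ι → Matrix (Fin n) (Fin p) ℝ) (X : Matrix (Fin n) (Fin p) ℝ) :
    Gdir (c • ∑ i ∈ s, G i) X = c • ∑ i ∈ s, Gdir (G i) X := by
  let L := IsLinearMap.mk' (Gdir · X) ⟨(Gdir_add · · X), (Gdir_smul · · X)⟩
  exact (map_smul L c _).trans (congrArg (c • ·) (map_sum L G s))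

theorem gradient_const_mul_sum {m k ι : Type*} [Fintype m] [Fintype k] (s : Finset ι) (c : ℝ)
    {f : ι → Matrix m k ℝ → ℝ} {g : ι → Matrix m k ℝ} {G X : Matrix m k ℝ}
    (hf : ∀ i ∈ s, DifferentiableAt ℝ (f i) X)
    (hg : ∀ i ∈ s, ∀ V, fderiv ℝ (f i) X V = minner (g i) V)
    (hG : ∀ V, fderiv ℝ (fun Y => c * ∑ i ∈ s, f i Y) X V = minner G V) :
    G = c • ∑ i ∈ s, g i := by
  have hderiv : fderiv ℝ (fun Y => c * ∑ i ∈ s, f i Y) X = c • ∑ i ∈ s, fderiv ℝ (f i) X :=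
    (fderiv_const_mul (DifferentiableAt.fun_sum hf) c).trans
      (congrArg (c • ·) (fderiv_fun_sum hf))
  refine eq_of_forall_minner_eq fun V => ?_
  rw [← hG, minner_smul_sum_left, hderiv]
  simp only [_root_.smul_apply, _root_.sum_apply, smul_eq_mul]
  exact congrArg (c * ·) (sum_congr rfl fun i hi => hg i hi V)

section Averages

variable {E : Type*} {d : ℕ}

theorem inv_smul_sum_add_const [AddCommGroup E] [Module ℝ E] (hd : d ≠ 0) (a : Fin d → E)
    (b : E) : (d : ℝ)⁻¹ • ∑ i, (a i + b) = (d : ℝ)⁻¹ • ∑ i, a i + b := by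
  rw [sum_add_distrib, smul_add, sum_const, card_univ, Fintype.card_fin,
    ← Nat.cast_smul_eq_nsmul ℝ, smul_smul, inv_mul_cancel₀ (Nat.cast_ne_zero.mpr hd), one_smul]

theorem norm_inv_smul_sum_le_of_norm_sub_le [SeminormedAddCommGroup E] [NormedSpace ℝ E]
    {u v : Fin d → E} {e : Fin d → ℝ} {L : ℝ} (h : ∀ i, ‖u i - v i‖ ≤ L * e i) :
    ‖(d : ℝ)⁻¹ • ∑ i, u i‖ ≤ ‖(d : ℝ)⁻¹ • ∑ i, v i‖ + L * ((d : ℝ)⁻¹ * ∑ i, e i) := by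
  have hdiff : ‖(d : ℝ)⁻¹ • ∑ i, u i - (d : ℝ)⁻¹ • ∑ i, v i‖ ≤ L * ((d : ℝ)⁻¹ * ∑ i, e i) :=
    calc ‖(d : ℝ)⁻¹ • ∑ i, u i - (d : ℝ)⁻¹ • ∑ i, v i‖
        = (d : ℝ)⁻¹ * ‖∑ i, (u i - v i)‖ := by
          rw [← smul_sub, ← sum_sub_distrib, norm_smul, Real.norm_of_nonneg (by positivity)]
      _ ≤ (d : ℝ)⁻¹ * ∑ i, L * e i := by gcongr; exact norm_sum_le_of_le _ fun i _ => h i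
      _ = L * ((d : ℝ)⁻¹ * ∑ i, e i) := by rw [← mul_sum]; ring
  exact (norm_le_norm_add_norm_sub' _ _).trans (add_le_add_right hdiff _)

theorem sq_inv_mul_sum_le (e : Fin d → ℝ) :
    ((d : ℝ)⁻¹ * ∑ i, e i) ^ 2 ≤ (d : ℝ)⁻¹ * ∑ i, e i ^ 2 := by
  simpa only [inv_mul_eq_div, card_univ, Fintype.card_fin] using
    sum_div_card_sq_le_sum_sq_div_card (s := univ) (f := e)

end Averages

theorem sq_add_le_of_le_add_mul {x y L a Q : ℝ} (hx : 0 ≤ x) (hxy : x ≤ y + L * a)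
    (ha : a ^ 2 ≤ Q) : x ^ 2 + Q ≤ 2 * (L ^ 2 + 1) * (y ^ 2 + Q) := by
  have hQ : 0 ≤ Q := (sq_nonneg a).trans ha
  nlinarith [pow_le_pow_left₀ hx hxy 2, sq_nonneg (y - L * a), sq_nonneg (L * y),
    mul_le_mul_of_nonneg_left ha (sq_nonneg L)]

theorem one_le_sq_sub_mul_of_max_le {M β : ℝ} (hβ : max 1 ((6 + 21 * M) / 5) ≤ β) :
    1 ≤ 5 / 6 * β ^ 2 - 7 / 2 * M * β := by
  have h₁ : 1 ≤ β := (le_max_left _ _).trans hβ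
  have h₂ : 1 ≤ 5 / 6 * β - 7 / 2 * M := by
    have := (le_max_right _ _).trans hβ
    rw [div_le_iff₀ (by norm_num)] at this
    linarith
  nlinarith [mul_le_mul_of_nonneg_left h₂ (zero_le_one.trans h₁)]

theorem stmt19_general {n p d : ℕ} (hd : 0 < d)
    (f : Fin d → Matrix (Fin n) (Fin p) ℝ → ℝ) (hf : ∀ i, Differentiable ℝ (f i))
    (gradf : Fin d → Matrix (Fin n) (Fin p) ℝ → Matrix (Fin n) (Fin p) ℝ)
    (hgrad : ∀ i X V, fderiv ℝ (f i) X V = minner (gradf i X) V)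
    (F : Matrix (Fin n) (Fin p) ℝ → ℝ) (hF : F = fun X => (d : ℝ)⁻¹ * ∑ i, f i X)
    (gradF : Matrix (Fin n) (Fin p) ℝ → Matrix (Fin n) (Fin p) ℝ)
    (hgradF : ∀ X V, fderiv ℝ F X V = minner (gradF X) V)
    (M : ℝ)
    (hbound : ∀ X : Matrix (Fin n) (Fin p) ℝ, frob (Xᵀ * X - 1) ≤ 1 / 6 → frob (gradF X) ≤ M)
    (β : ℝ) (hβ : max 1 ((6 + 21 * M) / 5) ≤ β)
    (H : Fin d → Matrix (Fin n) (Fin p) ℝ → Matrix (Fin n) (Fin p) ℝ)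
    (hH : ∀ i X, H i X = Gdir (gradf i X) X + β • Edir X)
    (X : Fin d → Matrix (Fin n) (Fin p) ℝ)
    (Xbar : Matrix (Fin n) (Fin p) ℝ)
    (hXbarR : frob (Xbarᵀ * Xbar - 1) ≤ 1 / 6)
    (Lhat : ℝ)
    (hLip : ∀ i, frob (H i Xbar - H i (X i)) ≤ Lhat * frob (Xbar - X i)) :
    frob ((d : ℝ)⁻¹ • ∑ i, Gdir (gradf i Xbar) Xbar) ^ 2
        + (d : ℝ)⁻¹ * ∑ i, frob (X i - Xbar) ^ 2
        + frob (Xbarᵀ * Xbar - 1) ^ 2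
      ≤ 2 * (Lhat ^ 2 + 1)
          * (frob ((d : ℝ)⁻¹ • ∑ i, H i (X i)) ^ 2
              + (d : ℝ)⁻¹ * ∑ i, frob (X i - Xbar) ^ 2) := by
  simp only [frob_eq_norm] at hbound hXbarR hLip ⊢
  subst hF
  have hgradF_avg : gradF Xbar = (d : ℝ)⁻¹ • ∑ i, gradf i Xbar :=
    gradient_const_mul_sum _ _ (fun i _ => (hf i).differentiableAt) (fun i _ => hgrad i Xbar)
      (hgradF Xbar)
  have hG_avg : (d : ℝ)⁻¹ • ∑ i, Gdir (gradf i Xbar) Xbar = Gdir (gradF Xbar) Xbar := by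
    rw [hgradF_avg, Gdir_smul_sum]
  have hH_avg : (d : ℝ)⁻¹ • ∑ i, H i Xbar = Gdir (gradF Xbar) Xbar + β • Edir Xbar := by
    simp only [hH]
    rw [inv_smul_sum_add_const hd.ne', hG_avg]
  have hcentral := sq_norm_Gdir_add_sq_le (hbound Xbar hXbarR) hXbarR
    (zero_le_one.trans ((le_max_left _ _).trans hβ)) (one_le_sq_sub_mul_of_max_le hβ)
  have hspread : ‖(d : ℝ)⁻¹ • ∑ i, H i Xbar‖
      ≤ ‖(d : ℝ)⁻¹ • ∑ i, H i (X i)‖ + Lhat * ((d : ℝ)⁻¹ * ∑ i, ‖X i - Xbar‖) :=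
    norm_inv_smul_sum_le_of_norm_sub_le fun i => by rw [norm_sub_rev (X i)]; exact hLip i
  rw [← hH_avg] at hcentral
  have hfinal := sq_add_le_of_le_add_mul (norm_nonneg _) hspread (sq_inv_mul_sum_le _)
  rw [hG_avg]
  linarith

/-- The deterministic aggregation step in the convergence proof of VRSGT:
the stationarity gap
`‖(1/d)Σᵢ Gᵢ(X̄)‖_F² + (1/d)Σᵢ ‖Xᵢ - X̄‖_F² + ‖X̄ᵀX̄ - I‖_F²` is bounded by
`2(L̂² + 1)(‖(1/d)Σᵢ Hᵢ(Xᵢ)‖_F² + (1/d)Σᵢ ‖Xᵢ - X̄‖_F²)`, provided `f = (1/d)Σᵢ fᵢ` has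
`‖∇f‖_F ≤ M` on `R = {X : ‖XᵀX - I‖_F ≤ 1/6}`, `β ≥ max{1, (6 + 21M)/5}`, `X̄ ∈ R`, and each
`Hᵢ = Gᵢ + βE` satisfies `‖Hᵢ(X̄) - Hᵢ(Xᵢ)‖_F ≤ L̂‖X̄ - Xᵢ‖_F`. -/
theorem stmt19 {n p d : ℕ} (hd : 0 < d)
    (f : Fin d → Matrix (Fin n) (Fin p) ℝ → ℝ) (hf : ∀ i, Differentiable ℝ (f i))
    (gradf : Fin d → Matrix (Fin n) (Fin p) ℝ → Matrix (Fin n) (Fin p) ℝ)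
    (hgrad : ∀ i X V, fderiv ℝ (f i) X V = minner (gradf i X) V)
    (F : Matrix (Fin n) (Fin p) ℝ → ℝ) (hF : F = fun X => (d : ℝ)⁻¹ * ∑ i, f i X)
    (gradF : Matrix (Fin n) (Fin p) ℝ → Matrix (Fin n) (Fin p) ℝ)
    (hgradF : ∀ X V, fderiv ℝ F X V = minner (gradF X) V)
    (M : ℝ) (hM : 0 < M)
    (hbound : ∀ X : Matrix (Fin n) (Fin p) ℝ, frob (Xᵀ * X - 1) ≤ 1 / 6 → frob (gradF X) ≤ M)
    (β : ℝ) (hβ : max 1 ((6 + 21 * M) / 5) ≤ β)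
    (H : Fin d → Matrix (Fin n) (Fin p) ℝ → Matrix (Fin n) (Fin p) ℝ)
    (hH : ∀ i X, H i X = Gdir (gradf i X) X + β • Edir X)
    (X : Fin d → Matrix (Fin n) (Fin p) ℝ)
    (Xbar : Matrix (Fin n) (Fin p) ℝ) (hXbar : Xbar = (d : ℝ)⁻¹ • ∑ i, X i)
    (hXbarR : frob (Xbarᵀ * Xbar - 1) ≤ 1 / 6)
    (Lhat : ℝ) (hLhat : 0 < Lhat)
    (hLip : ∀ i, frob (H i Xbar - H i (X i)) ≤ Lhat * frob (Xbar - X i)) :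
    frob ((d : ℝ)⁻¹ • ∑ i, Gdir (gradf i Xbar) Xbar) ^ 2
        + (d : ℝ)⁻¹ * ∑ i, frob (X i - Xbar) ^ 2
        + frob (Xbarᵀ * Xbar - 1) ^ 2
      ≤ 2 * (Lhat ^ 2 + 1)
          * (frob ((d : ℝ)⁻¹ • ∑ i, H i (X i)) ^ 2
              + (d : ℝ)⁻¹ * ∑ i, frob (X i - Xbar) ^ 2) :=
  stmt19_general hd f hf gradf hgrad F hF gradF hgradF M hbound β hβ H hH X Xbar hXbarR Lhat hLip
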